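/- Let X be a Binomial(m, q) random variable with 0 < q < 1/2, and define the estimator p̂ = 1/2 - (1/2)(1 - 2X/m)^{1/r} when X/m ≤ 1/2 and p̂ = 1/2 otherwise, where q = (1-(1-2p)^r)/2. Then for every ε > 0, P[|p̂ - p| > ε] → 0 as m → ∞. -/

import Mathlib

/-!
The estimate is `g (X / m)` for a function `g` that is continuous (as `r ≥ 1`) and satisfies
`g q = p`. The binomial variance `m q (1 - q)` (the variance identity of the Bernstein
polynomials) and Chebyshev's inequality give `P[|X / m - q| ≥ δ] ≤ q (1 - q) / (δ² m)`, and
continuity of `g` at `q` turns `|p̂ - p| > ε` into `|X / m - q| ≥ δ` for some `δ > 0`.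
-/

/-- The noise-level estimate computed from a syndrome weight `x` out of `m` syndrome bits,
with parity-check row weight `r`. -/
noncomputable def noiseEstimate (r m x : ℕ) : ℝ :=
  if (x : ℝ) / m ≤ 1 / 2 then 1 / 2 - (1 / 2) * (1 - 2 * (x : ℝ) / m) ^ ((1 : ℝ) / r)
  else 1 / 2

open Finset Filter Topology

theorem sum_sq_sub_mul_choose_mul_pow (m : ℕ) (q : ℝ) :
    ∑ x ∈ range (m + 1), ((m : ℝ) * q - x) ^ 2 * (m.choose x * q ^ x * (1 - q) ^ (m - x)) =
      m * q * (1 - q) := by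
  simpa [Polynomial.eval_finsetSum, bernsteinPolynomial, mul_assoc] using
    congrArg (Polynomial.eval q) (bernsteinPolynomial.variance ℝ m)

theorem choose_mul_pow_nonneg (m x : ℕ) {q : ℝ} (hq₀ : 0 ≤ q) (hq₁ : q ≤ 1) :
    0 ≤ (m.choose x : ℝ) * q ^ x * (1 - q) ^ (m - x) := by
  have := sub_nonneg.2 hq₁
  positivity

-- Chebyshev's inequality for the frequency `X / m` of `X ~ Binomial(m, q)`.
theorem sum_choose_mul_pow_le_of_far {m : ℕ} {q δ : ℝ} (hq₀ : 0 ≤ q) (hq₁ : q ≤ 1) (hm : 0 < m)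
    (hδ : 0 < δ) (P : ℕ → Prop) [DecidablePred P] (hP : ∀ x, P x → δ ≤ |(x : ℝ) / m - q|) :
    ∑ x ∈ range (m + 1), (if P x then (m.choose x : ℝ) * q ^ x * (1 - q) ^ (m - x) else 0) ≤
      q * (1 - q) / δ ^ 2 / m := by
  have hm' : (0 : ℝ) < m := by exact_mod_cast hm
  have term : ∀ x, (if P x then (m.choose x : ℝ) * q ^ x * (1 - q) ^ (m - x) else 0) ≤
      ((m : ℝ) * q - x) ^ 2 / (m * δ) ^ 2 * (m.choose x * q ^ x * (1 - q) ^ (m - x)) := by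
    intro x
    have hw := choose_mul_pow_nonneg m x hq₀ hq₁
    split_ifs with hx
    · refine le_mul_of_one_le_left hw ((one_le_div (by positivity)).2 ?_)
      have : (m : ℝ) * δ ≤ |(m : ℝ) * q - x| := by
        rw [abs_sub_comm, show (x : ℝ) - m * q = m * (x / m - q) by field_simp, abs_mul,
          abs_of_pos hm']
        exact mul_le_mul_of_nonneg_left (hP x hx) hm'.le
      simpa only [sq_abs] using pow_le_pow_left₀ (by positivity) this 2
    · positivity
  calc _ ≤ ∑ x ∈ range (m + 1),
        ((m : ℝ) * q - x) ^ 2 / (m * δ) ^ 2 * (m.choose x * q ^ x * (1 - q) ^ (m - x)) :=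
        sum_le_sum fun x _ => term x
    _ = q * (1 - q) / δ ^ 2 / m := by
      simp_rw [div_mul_eq_mul_div, ← sum_div, sum_sq_sub_mul_choose_mul_pow]
      field_simp

theorem tendsto_sum_choose_mul_pow_of_continuousAt {g : ℝ → ℝ} {q ε : ℝ} (hq₀ : 0 ≤ q)
    (hq₁ : q ≤ 1) (hg : ContinuousAt g q) (hε : 0 < ε) :
    Tendsto (fun m : ℕ => ∑ x ∈ range (m + 1),
        if ε < |g (x / m) - g q| then (m.choose x : ℝ) * q ^ x * (1 - q) ^ (m - x) else 0)
      atTop (𝓝 0) := by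
  obtain ⟨δ, hδ, hgδ⟩ := Metric.continuousAt_iff.1 hg ε hε
  have far : ∀ m x : ℕ, ε < |g (x / m) - g q| → δ ≤ |(x : ℝ) / m - q| := fun m x hx => by
    by_contra! hclose
    exact (hx.trans (hgδ hclose)).false
  refine squeeze_zero' (Eventually.of_forall fun m => sum_nonneg fun x _ => ?_)
    ((eventually_gt_atTop 0).mono fun m hm =>
      sum_choose_mul_pow_le_of_far hq₀ hq₁ hm hδ _ (far m))
    (tendsto_const_div_atTop_nhds_zero_nat _)
  split_ifs
  exacts [choose_mul_pow_nonneg m x hq₀ hq₁, le_rfl]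

noncomputable def noiseEstimateOfFreq (r : ℕ) (y : ℝ) : ℝ :=
  if y ≤ 1 / 2 then 1 / 2 - 1 / 2 * (1 - 2 * y) ^ ((1 : ℝ) / r) else 1 / 2

theorem noiseEstimate_eq_noiseEstimateOfFreq (r m x : ℕ) :
    noiseEstimate r m x = noiseEstimateOfFreq r (x / m) := by
  rw [noiseEstimate, noiseEstimateOfFreq, mul_div_assoc]

theorem continuous_noiseEstimateOfFreq {r : ℕ} (hr : r ≠ 0) :
    Continuous (noiseEstimateOfFreq r) := by
  refine Continuous.if_le ?_ continuous_const continuous_id continuous_const fun y hy => ?_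
  · have := Real.continuous_rpow_const (q := 1 / r) (by positivity)
    fun_prop
  rw [hy]
  norm_num [Real.zero_rpow (inv_ne_zero (Nat.cast_ne_zero.2 hr))]

theorem noiseEstimateOfFreq_syndromeRate {r : ℕ} (hr : r ≠ 0) {p : ℝ} (hp : p ≤ 1 / 2) :
    noiseEstimateOfFreq r ((1 - (1 - 2 * p) ^ r) / 2) = p := by
  have hp' : 0 ≤ 1 - 2 * p := by linarith
  rw [noiseEstimateOfFreq, if_pos (by linarith [pow_nonneg hp' r]),
    show 1 - 2 * ((1 - (1 - 2 * p) ^ r) / 2) = (1 - 2 * p) ^ r by ring,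
    one_div (r : ℝ), Real.pow_rpow_inv_natCast hp' hr]
  ring

/-- Consistency of the instantaneous noise-level estimator: if `X` is Binomial(m, q) with
`q = (1-(1-2p)^r)/2` for `p ∈ (0,1/2)` (so `0 < q < 1/2`), and
`p̂ = 1/2 - (1/2)(1-2X/m)^(1/r)` when `X/m ≤ 1/2` and `p̂ = 1/2` otherwise, then for every
`ε > 0` the probability `P[|p̂ - p| > ε]` tends to `0` as `m → ∞`. -/
theorem noise_estimator_consistent (r : ℕ) (hr : 1 ≤ r) (p : ℝ)
    (hp : p ∈ Set.Ioo (0:ℝ) (1 / 2)) (ε : ℝ) (hε : 0 < ε) :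
    Filter.Tendsto
      (fun m : ℕ =>
        ∑ x ∈ Finset.range (m + 1),
          if ε < |noiseEstimate r m x - p| then
            (m.choose x : ℝ) * ((1 - (1 - 2 * p) ^ r) / 2) ^ x
              * (1 - (1 - (1 - 2 * p) ^ r) / 2) ^ (m - x)
          else 0)
      Filter.atTop (nhds 0) := by
  have hr₀ : r ≠ 0 := by omega
  have h₀ : 0 ≤ 1 - 2 * p := by linarith [hp.2]
  have h₁ : 1 - 2 * p ≤ 1 := by linarith [hp.1]
  have hq₀ : 0 ≤ (1 - (1 - 2 * p) ^ r) / 2 := by linarith [pow_le_one₀ h₀ h₁ (n := r)]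
  have hq₁ : (1 - (1 - 2 * p) ^ r) / 2 ≤ 1 := by linarith [pow_nonneg h₀ r]
  simpa only [noiseEstimate_eq_noiseEstimateOfFreq,
    noiseEstimateOfFreq_syndromeRate hr₀ hp.2.le] using
    tendsto_sum_choose_mul_pow_of_continuousAt hq₀ hq₁
      (continuous_noiseEstimateOfFreq hr₀).continuousAt hε
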